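/- arXiv:1907.11780 — 3 statements merged into one kernel-verified Lean document; each statement's English description precedes it below -/
import Mathlib

section
/- Let f : ℝ^d → ℝ^c, x a point with predicted label ŷ (so f_ŷ(x) > f_k(x) for all k ≠ ŷ). Suppose for each k ≠ ŷ the function g_k = f_ŷ − f_k is Lipschitz with constant L_k on the closed ball B(x, r). Then for any z with ‖z‖ < min( min_{k≠ŷ} (f_ŷ(x) − f_k(x))/L_k , r ), the point x + z is still classified as ŷ, i.e., f_ŷ(x+z) > f_k(x+z) for all k ≠ ŷ. Consequently the distance from x to the decision boundary is at least min( min_{k≠ŷ} (f_ŷ(x) − f_k(x))/L_k , r ). -/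
theorem pos_add_of_norm_lt_div {E : Type*} [SeminormedAddCommGroup E] {g : E → ℝ} {L : ℝ}
    {x z : E} (hg : |g (x + z) - g x| ≤ L * ‖z‖) (hL : 0 < L) (hz : ‖z‖ < g x / L) :
    0 < g (x + z) := by
  have hLz : L * ‖z‖ < g x := by rwa [lt_div_iff₀ hL, mul_comm] at hz
  linarith [(abs_le.1 hg).1]

theorem le_dist_of_forall_norm_lt {E : Type*} [SeminormedAddCommGroup E] (P : E → Prop)
    {x : E} {ρ : ℝ} (h : ∀ z, ‖z‖ < ρ → P (x + z)) {u : E} (hu : ¬ P u) : ρ ≤ dist x u := by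
  by_contra! hlt
  rw [dist_comm, dist_eq_norm] at hlt
  exact hu (by simpa using h (u - x) hlt)

theorem stmt9_general {d c : ℕ} (f : EuclideanSpace ℝ (Fin d) → Fin c → ℝ)
    (x : EuclideanSpace ℝ (Fin d)) (yhat : Fin c)
    (L : Fin c → ℝ) (hL : ∀ k, 0 < L k) (r : ℝ)
    (hLip : ∀ k, k ≠ yhat → ∀ u ∈ Metric.closedBall x r, ∀ v ∈ Metric.closedBall x r,
      |(f u yhat - f u k) - (f v yhat - f v k)| ≤ L k * ‖u - v‖) :
    (∀ z : EuclideanSpace ℝ (Fin d),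
      ‖z‖ < min (⨅ k : {k : Fin c // k ≠ yhat}, (f x yhat - f x k.1) / L k.1) r →
      ∀ k, k ≠ yhat → f (x + z) k < f (x + z) yhat) ∧
    (∀ u : EuclideanSpace ℝ (Fin d), ¬ (∀ k, k ≠ yhat → f u k < f u yhat) →
      min (⨅ k : {k : Fin c // k ≠ yhat}, (f x yhat - f x k.1) / L k.1) r ≤ dist x u) := by
  have robust : ∀ z : EuclideanSpace ℝ (Fin d),
      ‖z‖ < min (⨅ k : {k : Fin c // k ≠ yhat}, (f x yhat - f x k.1) / L k.1) r →
      ∀ k, k ≠ yhat → f (x + z) k < f (x + z) yhat := by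
    intro z hz k hk
    have hzr : ‖z‖ < r := hz.trans_le (min_le_right _ _)
    have hzk : ‖z‖ < (f x yhat - f x k) / L k :=
      hz.trans_le <| (min_le_left _ _).trans <|
        ciInf_le (Finite.bddBelow_range _) (⟨k, hk⟩ : {k : Fin c // k ≠ yhat})
    have hlip := hLip k hk (x + z) (by simpa using hzr.le) x
      (Metric.mem_closedBall_self ((norm_nonneg z).trans hzr.le))
    rw [add_sub_cancel_left] at hlip
    exact sub_pos.1 (pos_add_of_norm_lt_div (g := fun u => f u yhat - f u k) hlip (hL k) hzk)
  exact ⟨robust, fun u => le_dist_of_forall_norm_lt (fun u => ∀ k, k ≠ yhat → f u k < f u yhat)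
    robust⟩

/-- Lipschitz robustness lower bound (Hein & Andriushchenko): if `f x yhat > f x k` for all
`k ≠ yhat`, and each `g_k = f · yhat − f · k` is `L k`-Lipschitz on the closed ball `B(x, r)`,
then every perturbation `z` with
`‖z‖ < min (⨅_{k ≠ yhat} (f x yhat − f x k) / L k) r` keeps the prediction `yhat`; consequently
any point not classified as `yhat` is at distance at least this bound from `x`. -/
theorem stmt9 {d c : ℕ} (f : EuclideanSpace ℝ (Fin d) → Fin c → ℝ)
    (x : EuclideanSpace ℝ (Fin d)) (yhat : Fin c) (hc : 2 ≤ c)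
    (hpred : ∀ k, k ≠ yhat → f x k < f x yhat)
    (L : Fin c → ℝ) (hL : ∀ k, 0 < L k) (r : ℝ) (hr : 0 < r)
    (hLip : ∀ k, k ≠ yhat → ∀ u ∈ Metric.closedBall x r, ∀ v ∈ Metric.closedBall x r,
      |(f u yhat - f u k) - (f v yhat - f v k)| ≤ L k * ‖u - v‖) :
    (∀ z : EuclideanSpace ℝ (Fin d),
      ‖z‖ < min (⨅ k : {k : Fin c // k ≠ yhat}, (f x yhat - f x k.1) / L k.1) r →
      ∀ k, k ≠ yhat → f (x + z) k < f (x + z) yhat) ∧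
    (∀ u : EuclideanSpace ℝ (Fin d), ¬ (∀ k, k ≠ yhat → f u k < f u yhat) →
      min (⨅ k : {k : Fin c // k ≠ yhat}, (f x yhat - f x k.1) / L k.1) r ≤ dist x u) :=
  stmt9_general f x yhat L hL r hLip
end

section
/- Let φ : ℝ → ℝ be decreasing, continuous, bounded below, differentiable at 0 with φ′(0) < 0, and let ψ(t) = max(0, τ − t) − max(0, −t) for some τ ≥ 0. Then the regularized loss ℓ = φ + λψ (λ ≥ 0) is Fisher consistent: for every η ∈ [0,1] with η ≠ 1/2, inf { C_η(α) : α(2η − 1) ≤ 0 } > inf { C_η(α) : α ∈ ℝ }, where C_η(α) = η ℓ(α) + (1 − η) ℓ(−α). -/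
/-- The average-margin regularizer `ψ(t) = max(0, τ − t) − max(0, −t)`. -/
noncomputable def psi (τ t : ℝ) : ℝ := max 0 (τ - t) - max 0 (-t)

/-- The conditional risk `C_η(α) = η ℓ(α) + (1 − η) ℓ(−α)`. -/
noncomputable def Crisk (ℓ : ℝ → ℝ) (η α : ℝ) : ℝ := η * ℓ α + (1 - η) * ℓ (-α)

/-!
By the symmetry `C_{1-η}(α) = C_η(-α)` we may assume `η > 1/2`, so the wrong side is `α ≤ 0`.
Since the `φ`-part of `C_η` has derivative `(2η - 1) φ'(0) < 0` at `0` and `ψ ≤ ψ(0)`, the risk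
`C_η` takes a value below `C_η(0) = ℓ(0)`, so `m = inf C_η < ℓ(0)`; right continuity and
`φ'(0) < 0` then give `s > 0` with `m < ℓ(s) < ℓ(0)`. For `α ∈ [-s, 0]` both `ℓ(α)` and `ℓ(-α)`
are at least `ℓ(s)`, so `C_η(α) ≥ ℓ(s)`; for `α ≤ -s`,
`C_η(α) = C_η(-α) + (2η - 1)(ℓ(α) - ℓ(-α)) ≥ m + (2η - 1)(ℓ(0) - ℓ(s))`.
Both bounds exceed `m`.
-/

open Filter Topology Set

lemma HasDerivAt.eventually_nhdsGT_lt {f : ℝ → ℝ} {f' x : ℝ} (hf : HasDerivAt f f' x)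
    (hf' : f' < 0) : ∀ᶠ y in 𝓝[>] x, f y < f x := by
  filter_upwards [(hf.tendsto_slope.mono_left (nhdsGT_le_nhdsNE x)).eventually
    (eventually_lt_nhds hf'), self_mem_nhdsWithin] with y hslope hxy
  have hsub : (y - x) * slope f x y = f y - f x := sub_smul_slope f x y
  nlinarith [mul_neg_of_pos_of_neg (sub_pos.2 (mem_Ioi.1 hxy)) hslope]

lemma psi_eq_min_max {τ : ℝ} (hτ : 0 ≤ τ) (t : ℝ) : psi τ t = min τ (max 0 (τ - t)) := by
  simp only [psi, max_def, min_def]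
  split_ifs <;> linarith

lemma psi_antitone {τ : ℝ} (hτ : 0 ≤ τ) : Antitone (psi τ) := fun a b hab => by
  simp only [psi_eq_min_max hτ]
  gcongr

lemma psi_nonneg {τ : ℝ} (hτ : 0 ≤ τ) (t : ℝ) : 0 ≤ psi τ t := by
  rw [psi_eq_min_max hτ]; exact le_min hτ (le_max_left _ _)

lemma psi_le {τ : ℝ} (hτ : 0 ≤ τ) (t : ℝ) : psi τ t ≤ τ := by
  rw [psi_eq_min_max hτ]; exact min_le_left _ _

lemma psi_zero {τ : ℝ} (hτ : 0 ≤ τ) : psi τ 0 = τ := by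
  simp [psi, hτ]

lemma continuous_psi (τ : ℝ) : Continuous (psi τ) := by
  unfold psi; fun_prop

section Crisk

variable {ℓ : ℝ → ℝ} {η : ℝ}

@[simp]
lemma Crisk_zero (ℓ : ℝ → ℝ) (η : ℝ) : Crisk ℓ η 0 = ℓ 0 := by
  simp only [Crisk, neg_zero]; ring

lemma Crisk_one_sub (ℓ : ℝ → ℝ) (η α : ℝ) : Crisk ℓ (1 - η) α = Crisk ℓ η (-α) := by
  simp only [Crisk, neg_neg]; ring

lemma Crisk_add_const_mul (f g : ℝ → ℝ) (c η α : ℝ) :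
    Crisk (fun t => f t + c * g t) η α = Crisk f η α + c * Crisk g η α := by
  simp only [Crisk]; ring

lemma Crisk_sub_Crisk_neg (ℓ : ℝ → ℝ) (η α : ℝ) :
    Crisk ℓ η α - Crisk ℓ η (-α) = (2 * η - 1) * (ℓ α - ℓ (-α)) := by
  simp only [Crisk, neg_neg]; ring

lemma le_Crisk (hη0 : 0 ≤ η) (hη1 : η ≤ 1) {c α : ℝ} (h : c ≤ ℓ α) (h' : c ≤ ℓ (-α)) :
    c ≤ Crisk ℓ η α := by
  unfold Crisk; nlinarith

lemma Crisk_le (hη0 : 0 ≤ η) (hη1 : η ≤ 1) {c α : ℝ} (h : ℓ α ≤ c) (h' : ℓ (-α) ≤ c) :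
    Crisk ℓ η α ≤ c := by
  unfold Crisk; nlinarith

lemma bddBelow_range_Crisk (hη0 : 0 ≤ η) (hη1 : η ≤ 1) (hℓ : BddBelow (range ℓ)) :
    BddBelow (range (Crisk ℓ η)) := by
  obtain ⟨c, hc⟩ := hℓ
  refine ⟨c, ?_⟩
  rintro _ ⟨α, rfl⟩
  exact le_Crisk hη0 hη1 (hc ⟨α, rfl⟩) (hc ⟨-α, rfl⟩)

lemma range_Crisk_one_sub (ℓ : ℝ → ℝ) (η : ℝ) :
    range (Crisk ℓ (1 - η)) = range (Crisk ℓ η) := by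
  have : Crisk ℓ (1 - η) = Crisk ℓ η ∘ Neg.neg := funext (Crisk_one_sub ℓ η)
  rw [this, neg_surjective.range_comp]

lemma setOf_Crisk_one_sub (ℓ : ℝ → ℝ) (η : ℝ) :
    {v | ∃ α : ℝ, α * (2 * (1 - η) - 1) ≤ 0 ∧ v = Crisk ℓ (1 - η) α}
      = {v | ∃ α : ℝ, α * (2 * η - 1) ≤ 0 ∧ v = Crisk ℓ η α} := by
  ext v
  constructor
  · rintro ⟨α, hα, rfl⟩
    exact ⟨-α, by linarith, Crisk_one_sub ℓ η α⟩
  · rintro ⟨α, hα, rfl⟩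
    exact ⟨-α, by linarith, by rw [Crisk_one_sub, neg_neg]⟩

lemma hasDerivAt_Crisk {d : ℝ} (hℓ : HasDerivAt ℓ d 0) :
    HasDerivAt (Crisk ℓ η) ((2 * η - 1) * d) 0 := by
  have hneg : HasDerivAt (fun α => ℓ (-α)) (-d) 0 := by
    have h0 : HasDerivAt ℓ d (-0) := by rwa [neg_zero]
    simpa [Function.comp_def] using h0.comp 0 (hasDerivAt_neg 0)
  exact ((hℓ.const_mul η).add (hneg.const_mul (1 - η))).congr_deriv (by ring)

lemma exists_Crisk_lt_of_hasDerivAt {d : ℝ} (hℓ : HasDerivAt ℓ d 0) (hd : d < 0)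
    (hη : 1 / 2 < η) : ∃ x, Crisk ℓ η x < ℓ 0 := by
  obtain ⟨x, hx⟩ :=
    ((hasDerivAt_Crisk hℓ).eventually_nhdsGT_lt (mul_neg_of_pos_of_neg (by linarith) hd)).exists
  exact ⟨x, by rwa [Crisk_zero] at hx⟩

lemma exists_Crisk_add_const_mul_lt {f g : ℝ → ℝ} {c : ℝ} (hc : 0 ≤ c) (hg : ∀ t, g t ≤ g 0)
    (hη0 : 0 ≤ η) (hη1 : η ≤ 1) (hf : ∃ x, Crisk f η x < f 0) :
    ∃ x, Crisk (fun t => f t + c * g t) η x < f 0 + c * g 0 := by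
  obtain ⟨x, hx⟩ := hf
  refine ⟨x, ?_⟩
  have hgx : c * Crisk g η x ≤ c * g 0 :=
    mul_le_mul_of_nonneg_left (Crisk_le hη0 hη1 (hg x) (hg (-x))) hc
  rw [Crisk_add_const_mul]
  linarith

theorem sInf_range_Crisk_lt_sInf_wrong_side (hℓ : Antitone ℓ) (hbdd : BddBelow (range ℓ))
    (hcont : ContinuousWithinAt ℓ (Ioi 0) 0) (hstrict : ∀ᶠ s in 𝓝[>] 0, ℓ s < ℓ 0)
    (hη : 1 / 2 < η) (hη1 : η ≤ 1) (hlt : ∃ x, Crisk ℓ η x < ℓ 0) :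
    sInf (range (Crisk ℓ η))
      < sInf {v | ∃ α : ℝ, α * (2 * η - 1) ≤ 0 ∧ v = Crisk ℓ η α} := by
  have hη0 : 0 ≤ η := by linarith
  set m := sInf (range (Crisk ℓ η))
  have hm : ∀ α, m ≤ Crisk ℓ η α := fun α => csInf_le (bddBelow_range_Crisk hη0 hη1 hbdd) ⟨α, rfl⟩
  obtain ⟨x, hx⟩ := hlt
  obtain ⟨s, ⟨hms, hs0⟩, hs⟩ := (((hcont.eventually (lt_mem_nhds ((hm x).trans_lt hx))).and
    hstrict).and self_mem_nhdsWithin).exists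
  have hgap : 0 < (2 * η - 1) * (ℓ 0 - ℓ s) := mul_pos (by linarith) (by linarith)
  calc m < min (ℓ s) (m + (2 * η - 1) * (ℓ 0 - ℓ s)) := lt_min hms (by linarith)
    _ ≤ _ := by
      refine le_csInf ⟨ℓ 0, 0, by simp, (Crisk_zero ℓ η).symm⟩ ?_
      rintro _ ⟨α, hα, rfl⟩
      have hα0 : α ≤ 0 := by nlinarith
      rcases le_total (-α) s with hnear | hfar
      · exact (min_le_left _ _).trans
          (le_Crisk hη0 hη1 (hℓ (hα0.trans (le_of_lt hs))) (hℓ hnear))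
      · refine (min_le_right _ _).trans ?_
        have hsym := Crisk_sub_Crisk_neg ℓ η α
        nlinarith [hm (-α), hℓ hα0, hℓ hfar]

end Crisk

/-- Fisher consistency of the regularized loss `ℓ = φ + λψ`: if `φ` is decreasing,
continuous, bounded below, differentiable at `0` with `φ′(0) < 0`, then for every
`η ∈ [0,1]` with `η ≠ 1/2`, the infimum of `C_η` over `{α : α(2η−1) ≤ 0}` is strictly
greater than the global infimum of `C_η`. -/
theorem stmt10 (φ : ℝ → ℝ) (hanti : Antitone φ) (hcont : Continuous φ)
    (hbdd : BddBelow (Set.range φ)) (φ' : ℝ) (hderiv : HasDerivAt φ φ' 0)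
    (hφ' : φ' < 0) (τ lam : ℝ) (hτ : 0 ≤ τ) (hlam : 0 ≤ lam)
    (η : ℝ) (hη0 : 0 ≤ η) (hη1 : η ≤ 1) (hη : η ≠ 1 / 2) :
    sInf (Set.range fun α => Crisk (fun t => φ t + lam * psi τ t) η α)
      < sInf {v | ∃ α : ℝ, α * (2 * η - 1) ≤ 0 ∧
          v = Crisk (fun t => φ t + lam * psi τ t) η α} := by
  set ℓ := fun t => φ t + lam * psi τ t
  have hℓ_anti : Antitone ℓ := hanti.add ((psi_antitone hτ).const_mul hlam)
  have hℓ_bdd : BddBelow (range ℓ) :=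
    hbdd.range_add ⟨0, by rintro _ ⟨t, rfl⟩; exact mul_nonneg hlam (psi_nonneg hτ t)⟩
  have hℓ_cont : ContinuousWithinAt ℓ (Ioi 0) 0 :=
    (hcont.add (continuous_const.mul (continuous_psi τ))).continuousWithinAt
  have hℓ_strict : ∀ᶠ s in 𝓝[>] 0, ℓ s < ℓ 0 := by
    filter_upwards [hderiv.eventually_nhdsGT_lt hφ', self_mem_nhdsWithin] with s hφs hs
    exact add_lt_add_of_lt_of_le hφs
      (mul_le_mul_of_nonneg_left (psi_antitone hτ (le_of_lt hs)) hlam)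
  have key : ∀ η', 1 / 2 < η' → η' ≤ 1 → sInf (range (Crisk ℓ η')) <
      sInf {v | ∃ α : ℝ, α * (2 * η' - 1) ≤ 0 ∧ v = Crisk ℓ η' α} := fun η' h h1 =>
    sInf_range_Crisk_lt_sInf_wrong_side hℓ_anti hℓ_bdd hℓ_cont hℓ_strict h h1 <|
      exists_Crisk_add_const_mul_lt hlam (fun t => (psi_le hτ t).trans_eq (psi_zero hτ).symm)
        (by linarith) h1 (exists_Crisk_lt_of_hasDerivAt hderiv hφ' h)
  rcases hη.lt_or_gt with hlt | hgt
  · simpa only [range_Crisk_one_sub, setOf_Crisk_one_sub] using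
      key (1 - η) (by linarith) (by linarith)
  · exact key η hgt hη1
end

section
/- For a multiclass linear classifier in feature space with weight vectors w_1, …, w_c and predicted class ŷ for a feature vector φ (i.e., ⟨w_ŷ, φ⟩ > ⟨w_k, φ⟩ for all k ≠ ŷ), the Euclidean distance from φ to the decision boundary equals min_{k ≠ ŷ} ⟨w_ŷ − w_k, φ⟩ / ‖w_ŷ − w_k‖. -/
open scoped RealInnerProductSpace Topology
open Metric Set Filter

/-!
With `v k = w ŷ - w k`, the decision region is the cone `P = {z | ∀ k ≠ ŷ, 0 ≤ ⟪v k, z⟫}`.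
A point of its frontier lies in some closed half-space `⟪v k, z⟫ ≤ 0` (otherwise it would lie
in the open set where all the inequalities are strict, inside `P`), so by Cauchy–Schwarz its
distance to `φ` is at least `⟪v k, φ⟫ / ‖v k‖`. Conversely, the orthogonal projection of `φ`
onto the hyperplane `⟪v k, z⟫ = 0` of a minimising `k` is at exactly that distance, and it
stays in `P` because the balls of radius `⟪v j, φ⟫ / ‖v j‖` around `φ` lie in the half-spaces
`0 ≤ ⟪v j, z⟫`; it lies on the frontier since moving along `-v k` leaves `P`.
-/

section HalfSpace

variable {E : Type*} [NormedAddCommGroup E] [InnerProductSpace ℝ E]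

theorem inner_le_inner_add_norm_mul_dist (v φ z : E) :
    ⟪v, φ⟫ ≤ ⟪v, z⟫ + ‖v‖ * dist φ z := by
  have h := real_inner_le_norm v (φ - z)
  rw [inner_sub_right, ← dist_eq_norm] at h
  linarith

theorem div_norm_le_dist_of_inner_nonpos {v z : E} (φ : E) (hz : ⟪v, z⟫ ≤ 0) :
    ⟪v, φ⟫ / ‖v‖ ≤ dist φ z := by
  refine div_le_of_le_mul₀ (norm_nonneg v) dist_nonneg ?_
  linarith [inner_le_inner_add_norm_mul_dist v φ z]

theorem inner_nonneg_of_dist_le_div_norm {v φ z : E} (h : dist φ z ≤ ⟪v, φ⟫ / ‖v‖) :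
    0 ≤ ⟪v, z⟫ := by
  rcases eq_or_ne v 0 with rfl | hv
  · simp
  rw [le_div_iff₀ (norm_pos_iff.mpr hv)] at h
  linarith [inner_le_inner_add_norm_mul_dist v φ z]

theorem inner_sub_inner_div_norm_sq_smul_self {v : E} (hv : v ≠ 0) (φ : E) :
    ⟪v, φ - (⟪v, φ⟫ / ‖v‖ ^ 2) • v⟫ = 0 := by
  have : ‖v‖ ≠ 0 := norm_ne_zero_iff.mpr hv
  rw [inner_sub_right, real_inner_smul_right, real_inner_self_eq_norm_sq]
  field_simp
  ring

theorem dist_sub_inner_div_norm_sq_smul_self (v φ : E) :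
    dist φ (φ - (⟪v, φ⟫ / ‖v‖ ^ 2) • v) = |⟪v, φ⟫| / ‖v‖ := by
  rcases eq_or_ne v 0 with rfl | hv
  · simp
  have : ‖v‖ ≠ 0 := norm_ne_zero_iff.mpr hv
  rw [dist_eq_norm, sub_sub_cancel, norm_smul, Real.norm_eq_abs, abs_div, abs_pow, abs_norm]
  field_simp

end HalfSpace

section PolyhedralCone

variable {E ι : Type*} [NormedAddCommGroup E] [InnerProductSpace ℝ E] {v : ι → E} {z : E}

theorem exists_inner_nonpos_of_mem_frontier [Finite ι]
    (hz : z ∈ frontier {x | ∀ i, 0 ≤ ⟪v i, x⟫}) : ∃ i, ⟪v i, z⟫ ≤ 0 := by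
  by_contra! h
  have hopen : IsOpen {x | ∀ i, 0 < ⟪v i, x⟫} := by
    rw [Set.ofPred_forall]
    exact isOpen_iInter_of_finite fun i => isOpen_lt continuous_const (by fun_prop)
  exact hz.2 (interior_maximal (fun x hx i => (hx i).le) hopen h)

theorem mem_frontier_of_inner_eq_zero {i : ι} (hv : v i ≠ 0)
    (hz : ∀ j, 0 ≤ ⟪v j, z⟫) (hzi : ⟪v i, z⟫ = 0) :
    z ∈ frontier {x | ∀ j, 0 ≤ ⟪v j, x⟫} := by
  refine ⟨subset_closure hz, fun hint => ?_⟩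
  have hlim : Tendsto (fun t : ℝ => z - t • v i) (𝓝[>] 0) (𝓝 z) := by
    have : Continuous fun t : ℝ => z - t • v i := by fun_prop
    simpa using (this.tendsto 0).mono_left nhdsWithin_le_nhds
  obtain ⟨t, ht, hmem⟩ :=
    ((eventually_mem_nhdsWithin (s := Ioi (0:ℝ))).and (hlim.eventually (mem_interior_iff_mem_nhds.mp hint))).exists
  have h := hmem i
  rw [inner_sub_right, real_inner_smul_right, hzi, real_inner_self_eq_norm_sq] at h
  have : 0 < t * ‖v i‖ ^ 2 := mul_pos ht (pow_pos (norm_pos_iff.mpr hv) 2)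
  linarith

theorem infDist_frontier_setOf_forall_inner_nonneg [Finite ι] (hv : ∀ i, v i ≠ 0) {φ : E}
    (hφ : ∀ i, 0 ≤ ⟪v i, φ⟫) :
    infDist φ (frontier {x | ∀ i, 0 ≤ ⟪v i, x⟫}) = ⨅ i, ⟪v i, φ⟫ / ‖v i‖ := by
  rcases isEmpty_or_nonempty ι with hι | hι
  · simp
  obtain ⟨i₀, hi₀⟩ := Finite.exists_min fun i => ⟪v i, φ⟫ / ‖v i‖
  rw [le_antisymm (ciInf_le (Finite.bddBelow_range _) i₀) (le_ciInf hi₀)]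
  set z₀ := φ - (⟪v i₀, φ⟫ / ‖v i₀‖ ^ 2) • v i₀
  have hdist : dist φ z₀ = ⟪v i₀, φ⟫ / ‖v i₀‖ := by
    rw [dist_sub_inner_div_norm_sq_smul_self, abs_of_nonneg (hφ i₀)]
  have hz₀ : z₀ ∈ frontier {x | ∀ i, 0 ≤ ⟪v i, x⟫} :=
    mem_frontier_of_inner_eq_zero (hv i₀)
      (fun i => inner_nonneg_of_dist_le_div_norm (hdist.trans_le (hi₀ i)))
      (inner_sub_inner_div_norm_sq_smul_self (hv i₀) φ)
  refine le_antisymm (hdist ▸ infDist_le_dist_of_mem hz₀) ((le_infDist ⟨z₀, hz₀⟩).2 ?_)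
  intro z hz
  obtain ⟨i, hi⟩ := exists_inner_nonpos_of_mem_frontier hz
  exact (hi₀ i).trans (div_norm_le_dist_of_inner_nonpos φ hi)

end PolyhedralCone

theorem stmt16_general {E : Type*} [NormedAddCommGroup E] [InnerProductSpace ℝ E]
    {c : ℕ} (w : Fin c → E) (yhat : Fin c) (φ : E)
    (hw : ∀ k, k ≠ yhat → w k ≠ w yhat)
    (hpred : ∀ k, k ≠ yhat → ⟪w k, φ⟫ < ⟪w yhat, φ⟫) :
    Metric.infDist φ (frontier {z : E | ∀ k, ⟪w k, z⟫ ≤ ⟪w yhat, z⟫})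
      = ⨅ k : {k : Fin c // k ≠ yhat}, ⟪w yhat - w k.1, φ⟫ / ‖w yhat - w k.1‖ := by
  have hregion : {z : E | ∀ k, ⟪w k, z⟫ ≤ ⟪w yhat, z⟫}
      = {z | ∀ k : {k : Fin c // k ≠ yhat}, 0 ≤ ⟪w yhat - w k.1, z⟫} := by
    ext z
    simp only [mem_ofPred_eq, inner_sub_left, sub_nonneg, Subtype.forall]
    exact ⟨fun h k _ => h k, fun h k => if hk : k = yhat then hk ▸ le_rfl else h k hk⟩
  rw [hregion]
  refine infDist_frontier_setOf_forall_inner_nonneg (fun k => ?_) (fun k => ?_)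
  · exact sub_ne_zero.mpr (hw k.1 k.2).symm
  · rw [inner_sub_left, sub_nonneg]
    exact (hpred k.1 k.2).le

/-- For a multiclass linear classifier with weights `w 1, …, w c` predicting class `yhat`
at the feature vector `φ` (i.e. `⟪w yhat, φ⟫ > ⟪w k, φ⟫` for `k ≠ yhat`), the distance
from `φ` to the boundary of the decision region
`F = {z | ∀ k, ⟪w k, z⟫ ≤ ⟪w yhat, z⟫}` equals
`min_{k ≠ yhat} ⟪w yhat − w k, φ⟫ / ‖w yhat − w k‖`. -/
theorem stmt16 {E : Type*} [NormedAddCommGroup E] [InnerProductSpace ℝ E]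
    {c : ℕ} (hc : 2 ≤ c) (w : Fin c → E) (yhat : Fin c) (φ : E)
    (hw : ∀ k, k ≠ yhat → w k ≠ w yhat)
    (hpred : ∀ k, k ≠ yhat → ⟪w k, φ⟫ < ⟪w yhat, φ⟫) :
    Metric.infDist φ (frontier {z : E | ∀ k, ⟪w k, z⟫ ≤ ⟪w yhat, z⟫})
      = ⨅ k : {k : Fin c // k ≠ yhat}, ⟪w yhat - w k.1, φ⟫ / ‖w yhat - w k.1‖ :=
  stmt16_general w yhat φ hw hpred
end
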